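/- arXiv:2412.07915 — 2 statements merged into one kernel-verified Lean document; each statement's English description precedes it below -/
import Mathlib

section
/- Let X, Y be linearly independent d-dimensional subspaces of ℝ^n (i.e., X ∩ Y = {0}). Let x, x' be independently uniformly sampled from the unit sphere of X, and y uniformly sampled from the unit sphere of Y, independent of x. Then E[⟨x, y⟩²] < E[⟨x, x'⟩²] = 1/d. -/
open MeasureTheory Metric Set
open scoped RealInnerProductSpace Pointwise

/-! Invariance of the sphere measure under linear isometries (a reflection maps `u` to `v` when
`‖u‖ = ‖v‖`) makes `∫ ⟪v, z⟫²` depend only on `‖v‖`, and summing over an orthonormal basis gives `⨍ ⟪v, z⟫² = ‖v‖² / d`. Hence the inner average of `⟪f z, g w⟫²`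
over `w` is `‖g† (f z)‖² / d`, with `‖g† (f z)‖ < 1` because `g g†` is the orthogonal projection
onto `Y` and the unit vector `f z ∈ X` is not in `Y`. A continuous function that is everywhere
`< 1 / d` on the compact sphere has average `< 1 / d`. -/

namespace LinearIsometryEquiv

variable {E : Type*} [NormedAddCommGroup E] [NormedSpace ℝ E]

def sphereHomeomorph (ι : E ≃ₗᵢ[ℝ] E) : sphere (0 : E) 1 ≃ₜ sphere (0 : E) 1 :=
  ι.toHomeomorph.subtype fun x => by simp

variable [MeasurableSpace E] [BorelSpace E]

lemma measurePreserving_sphereHomeomorph {μ : Measure E} (ι : E ≃ₗᵢ[ℝ] E)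
    (hι : MeasurePreserving ι μ μ) :
    MeasurePreserving ι.sphereHomeomorph μ.toSphere μ.toSphere := by
  refine ⟨ι.sphereHomeomorph.continuous.measurable, ?_⟩
  ext s hs
  have himage : (↑) '' (ι.sphereHomeomorph ⁻¹' s) = ι ⁻¹' ((↑) '' s) := by
    ext x
    constructor
    · rintro ⟨z, hz, rfl⟩
      exact ⟨_, hz, rfl⟩
    · rintro ⟨z, hz, hzx⟩
      have hx : x ∈ sphere (0 : E) 1 := by simpa [hzx] using norm_eq_of_mem_sphere z
      have : ι.sphereHomeomorph ⟨x, hx⟩ = z := Subtype.ext hzx.symm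
      exact ⟨⟨x, hx⟩, by rwa [mem_preimage, this], rfl⟩
  have hsmul : Ioo (0 : ℝ) 1 • (ι ⁻¹' ((↑) '' s)) = ι ⁻¹' (Ioo (0 : ℝ) 1 • ((↑) '' s)) := by
    ext x
    simp only [mem_smul, mem_preimage]
    constructor
    · rintro ⟨c, hc, y, hy, rfl⟩
      exact ⟨c, hc, ι y, hy, (ι.map_smul c y).symm⟩
    · rintro ⟨c, hc, y, hy, hyx⟩
      exact ⟨c, hc, ι.symm y, by simpa using hy, ι.injective (by simp [hyx])⟩
  rw [Measure.map_apply ι.sphereHomeomorph.continuous.measurable hs, μ.toSphere_apply' hs,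
    μ.toSphere_apply' (ι.sphereHomeomorph.continuous.measurable hs), himage, hsmul,
    hι.measure_preimage_emb ι.toHomeomorph.measurableEmbedding]

end LinearIsometryEquiv

lemma average_lt_of_continuous_of_forall_lt {X : Type*} [TopologicalSpace X] [CompactSpace X]
    [MeasurableSpace X] [OpensMeasurableSpace X] {μ : Measure X} [IsFiniteMeasure μ] [NeZero μ]
    {h : X → ℝ} (hh : Continuous h) {c : ℝ} (hlt : ∀ x, h x < c) : ⨍ x, h x ∂μ < c := by
  obtain ⟨x, hx⟩ :=
    exists_average_le (NeZero.ne μ) (hh.integrable_of_hasCompactSupport (.of_compactSpace h))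
  exact hx.trans_lt (hlt x)

section SphereAverage

variable {E : Type*} [NormedAddCommGroup E] [InnerProductSpace ℝ E] [FiniteDimensional ℝ E]
  [MeasurableSpace E] [BorelSpace E]

local notation "σ" => Measure.toSphere (volume : Measure E)

lemma integral_inner_sq_sphere_congr {u v : E} (h : ‖u‖ = ‖v‖) :
    ∫ z : sphere (0 : E) 1, ⟪u, z⟫ ^ 2 ∂σ = ∫ z : sphere (0 : E) 1, ⟪v, z⟫ ^ 2 ∂σ := by
  set ι := (ℝ ∙ (u - v))ᗮ.reflection
  have hmp := ι.measurePreserving_sphereHomeomorph ι.measurePreserving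
  calc ∫ z : sphere (0 : E) 1, ⟪u, z⟫ ^ 2 ∂σ
      = ∫ z : sphere (0 : E) 1, ⟪ι u, ι z⟫ ^ 2 ∂σ := by simp_rw [ι.inner_map_map]
    _ = ∫ z : sphere (0 : E) 1, ⟪v, ι.sphereHomeomorph z⟫ ^ 2 ∂σ := by
      rw [Submodule.reflection_sub h]; rfl
    _ = ∫ z : sphere (0 : E) 1, ⟪v, z⟫ ^ 2 ∂σ :=
      hmp.integral_comp ι.sphereHomeomorph.measurableEmbedding fun z => ⟪v, (z : E)⟫ ^ 2

lemma finrank_mul_integral_inner_sq_sphere (v : E) :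
    Module.finrank ℝ E * ∫ z : sphere (0 : E) 1, ⟪v, z⟫ ^ 2 ∂σ = ‖v‖ ^ 2 * (σ).real univ := by
  let b := stdOrthonormalBasis ℝ E
  have hb : ∀ i, ∫ z : sphere (0 : E) 1, ⟪v, z⟫ ^ 2 ∂σ
      = ‖v‖ ^ 2 * ∫ z : sphere (0 : E) 1, ⟪b i, z⟫ ^ 2 ∂σ := fun i => by
    rw [integral_inner_sq_sphere_congr (v := ‖v‖ • b i) (by simp [norm_smul, b.norm_eq_one]),
      ← integral_const_mul]
    simp_rw [real_inner_smul_left, mul_pow]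
  have hint : ∀ i, Integrable (fun z : sphere (0 : E) 1 => ⟪b i, z⟫ ^ 2) σ := fun i =>
    (by fun_prop : Continuous _).integrable_of_hasCompactSupport (.of_compactSpace _)
  calc Module.finrank ℝ E * ∫ z : sphere (0 : E) 1, ⟪v, z⟫ ^ 2 ∂σ
      = ∑ i, ‖v‖ ^ 2 * ∫ z : sphere (0 : E) 1, ⟪b i, z⟫ ^ 2 ∂σ := by
        simp [← hb]
    _ = ‖v‖ ^ 2 * ∫ z : sphere (0 : E) 1, ∑ i, ⟪b i, z⟫ ^ 2 ∂σ := by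
        rw [← Finset.mul_sum, integral_finsetSum _ fun i _ => hint i]
    _ = ‖v‖ ^ 2 * (σ).real univ := by
        simp_rw [b.sum_sq_inner_right, norm_eq_of_mem_sphere]
        simp

lemma average_inner_sq_sphere (v : E) :
    ⨍ z : sphere (0 : E) 1, ⟪v, z⟫ ^ 2 ∂σ = ‖v‖ ^ 2 / Module.finrank ℝ E := by
  rcases subsingleton_or_nontrivial E with hE | hE
  · simp [Subsingleton.elim v 0]
  have : NeZero (σ) := ⟨Measure.toSphere_ne_zero _⟩
  have hd : (Module.finrank ℝ E : ℝ) ≠ 0 := Nat.cast_ne_zero.2 Module.finrank_pos.ne'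
  rw [average_eq, smul_eq_mul, eq_div_iff hd, mul_comm, mul_left_comm,
    finrank_mul_integral_inner_sq_sphere, mul_comm (‖v‖ ^ 2),
    inv_mul_cancel_left₀ measureReal_univ_ne_zero]

end SphereAverage

section Adjoint

variable {E F : Type*} [NormedAddCommGroup E] [InnerProductSpace ℝ E] [FiniteDimensional ℝ E]
  [NormedAddCommGroup F] [InnerProductSpace ℝ F] [FiniteDimensional ℝ F]

lemma LinearIsometry.norm_adjoint_apply_lt (g : E →ₗᵢ[ℝ] F) {v : F}
    (hv : v ∉ LinearMap.range g.toLinearMap) :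
    ‖LinearMap.adjoint g.toLinearMap v‖ < ‖v‖ := by
  set u := LinearMap.adjoint g.toLinearMap v
  have hpythagoras : ‖v‖ ^ 2 = ‖u‖ ^ 2 + ‖v - g u‖ ^ 2 := by
    have : ⟪v, g u⟫ = ‖u‖ ^ 2 := by
      rw [← real_inner_self_eq_norm_sq]
      exact (LinearMap.adjoint_inner_left _ u v).symm
    rw [norm_sub_sq_real, this, g.norm_map]
    ring
  have hne : 0 < ‖v - g u‖ := norm_pos_iff.2 (sub_ne_zero.2 fun h => hv ⟨u, h.symm⟩)
  refine lt_of_pow_lt_pow_left₀ 2 (norm_nonneg v) ?_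
  rw [hpythagoras]
  exact lt_add_of_pos_right _ (pow_pos hne 2)

variable [MeasurableSpace E] [BorelSpace E]

lemma LinearIsometry.average_inner_sq_sphere (g : E →ₗᵢ[ℝ] F) (v : F) :
    ⨍ w : sphere (0 : E) 1, ⟪v, g w⟫ ^ 2 ∂(volume : Measure E).toSphere
      = ‖LinearMap.adjoint g.toLinearMap v‖ ^ 2 / Module.finrank ℝ E := by
  rw [← _root_.average_inner_sq_sphere]
  simp_rw [LinearMap.adjoint_inner_left]
  rfl

end Adjoint

/-- Let `X`, `Y` be linearly independent `d`-dimensional subspaces of `ℝⁿ`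
(presented as ranges of linear isometries `f`, `g : ℝᵈ → ℝⁿ` with `X ∩ Y = {0}`).
For `x, x'` independent uniform on the unit sphere of `X` and `y` uniform on the unit
sphere of `Y`, one has `E[⟨x, y⟩²] < E[⟨x, x'⟩²] = 1/d`. -/
theorem expected_inner_sq_subspaces (n d : ℕ) (hd : 0 < d)
    (f g : EuclideanSpace ℝ (Fin d) →ₗᵢ[ℝ] EuclideanSpace ℝ (Fin n))
    (hindep : LinearMap.range f.toLinearMap ⊓ LinearMap.range g.toLinearMap = ⊥) :
    (⨍ z : sphere (0 : EuclideanSpace ℝ (Fin d)) 1,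
      ⨍ w : sphere (0 : EuclideanSpace ℝ (Fin d)) 1,
        ⟪f (z : EuclideanSpace ℝ (Fin d)), g (w : EuclideanSpace ℝ (Fin d))⟫ ^ 2
      ∂((volume : Measure (EuclideanSpace ℝ (Fin d))).toSphere)
      ∂((volume : Measure (EuclideanSpace ℝ (Fin d))).toSphere))
    < (⨍ z : sphere (0 : EuclideanSpace ℝ (Fin d)) 1,
      ⨍ w : sphere (0 : EuclideanSpace ℝ (Fin d)) 1,
        ⟪f (z : EuclideanSpace ℝ (Fin d)), f (w : EuclideanSpace ℝ (Fin d))⟫ ^ 2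
      ∂((volume : Measure (EuclideanSpace ℝ (Fin d))).toSphere)
      ∂((volume : Measure (EuclideanSpace ℝ (Fin d))).toSphere))
    ∧ (⨍ z : sphere (0 : EuclideanSpace ℝ (Fin d)) 1,
      ⨍ w : sphere (0 : EuclideanSpace ℝ (Fin d)) 1,
        ⟪f (z : EuclideanSpace ℝ (Fin d)), f (w : EuclideanSpace ℝ (Fin d))⟫ ^ 2
      ∂((volume : Measure (EuclideanSpace ℝ (Fin d))).toSphere)
      ∂((volume : Measure (EuclideanSpace ℝ (Fin d))).toSphere)) = 1 / d := by
  have : Nonempty (Fin d) := Fin.pos_iff_nonempty.mp hd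
  have hXX (z : sphere (0 : EuclideanSpace ℝ (Fin d)) 1) :
      ⨍ w : sphere (0 : EuclideanSpace ℝ (Fin d)) 1, ⟪f z, f w⟫ ^ 2
        ∂(volume : Measure (EuclideanSpace ℝ (Fin d))).toSphere = 1 / d := by
    simp_rw [f.inner_map_map]
    rw [average_inner_sq_sphere, norm_eq_of_mem_sphere, finrank_euclideanSpace_fin, one_pow]
  have hXY (z : sphere (0 : EuclideanSpace ℝ (Fin d)) 1) :
      ⨍ w : sphere (0 : EuclideanSpace ℝ (Fin d)) 1, ⟪f z, g w⟫ ^ 2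
        ∂(volume : Measure (EuclideanSpace ℝ (Fin d))).toSphere
        = ‖LinearMap.adjoint g.toLinearMap (f z)‖ ^ 2 / d := by
    rw [g.average_inner_sq_sphere, finrank_euclideanSpace_fin]
  have hlt (z : sphere (0 : EuclideanSpace ℝ (Fin d)) 1) :
      ‖LinearMap.adjoint g.toLinearMap (f z)‖ ^ 2 / d < 1 / d := by
    have hfz : f z ∉ LinearMap.range g.toLinearMap := fun hmem => by
      have : f z ∈ LinearMap.range f.toLinearMap ⊓ LinearMap.range g.toLinearMap :=
        ⟨⟨z, rfl⟩, hmem⟩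
      rw [hindep, Submodule.mem_bot, ← norm_eq_zero, f.norm_map, norm_eq_of_mem_sphere] at this
      exact one_ne_zero this
    have := g.norm_adjoint_apply_lt hfz
    rw [f.norm_map, norm_eq_of_mem_sphere] at this
    gcongr
    exact pow_lt_one₀ (norm_nonneg _) this two_ne_zero
  have : NeZero (volume : Measure (EuclideanSpace ℝ (Fin d))).toSphere :=
    ⟨Measure.toSphere_ne_zero _⟩
  simp_rw [hXX, hXY, average_const, and_true]
  exact average_lt_of_continuous_of_forall_lt (by fun_prop) hlt
end

section
/- Let |ψ⟩ be a unit vector and U⁺, U⁻ nonempty subsets of the unitary group on a finite-dimensional Hilbert space such that the fidelity kernel k(D,D') = |⟨ψ|D†D'|ψ⟩|² equals 1 whenever D, D' are in the same class and 0 otherwise. Then there exist a subgroup S of the unitary group and elements C₊ ∈ U⁺, C₋ ∈ U⁻ such that: (1) U⁺ ⊆ C₊S and U⁻ ⊆ C₋S; (2) every S ∈ S fixes |ψ⟩ up to a global phase; (3) ⟨ψ|C₊†C₋|ψ⟩ = 0. -/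
open Matrix Complex

/-- The fidelity quantum kernel `k(D, D') = |⟨ψ|D†D'|ψ⟩|²` on unitaries. -/
noncomputable def fidKernel {N : ℕ} (ψ : Fin N → ℂ)
    (D D' : Matrix.unitaryGroup (Fin N) ℂ) : ℝ :=
  ‖(star ψ ⬝ᵥ ((((D : Matrix (Fin N) (Fin N) ℂ))ᴴ
    * (D' : Matrix (Fin N) (Fin N) ℂ)) *ᵥ ψ))‖ ^ 2

/-! Equality in Cauchy–Schwarz: `|⟨ψ|C†D|ψ⟩| = 1` forces `C†D ψ` to be a phase multiple of `ψ`,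
so `C⁻¹ D` lies in the subgroup of unitaries fixing the ray through `ψ`. Taking `S` to be that
subgroup and `C₊ ∈ U⁺`, `C₋ ∈ U⁻` arbitrary, the kernel values `1` within a class give the coset
conditions and the value `0` across classes gives `⟨ψ|C₊†C₋|ψ⟩ = 0`. -/

theorem exists_exp_smul_of_norm_inner_eq_one {E : Type*} [NormedAddCommGroup E]
    [InnerProductSpace ℂ E] {x y : E} (hx : ‖x‖ = 1) (hy : ‖y‖ = 1) (h : ‖inner ℂ x y‖ = 1) :
    ∃ θ : ℝ, y = exp (θ * I) • x := by
  have hx₀ : x ≠ 0 := norm_ne_zero_iff.1 (by simp [hx])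
  have hy₀ : y ≠ 0 := norm_ne_zero_iff.1 (by simp [hy])
  obtain ⟨r, -, rfl⟩ := (norm_inner_eq_norm_iff hx₀ hy₀).1 (by rw [h, hx, hy, mul_one])
  have hr : ‖r‖ = 1 := by simpa [norm_smul, hx] using hy
  refine ⟨arg r, ?_⟩
  rw [← one_mul (exp _), ← ofReal_one, ← hr, norm_mul_exp_arg_mul_I]

namespace Matrix

variable {n : Type*} [Fintype n]

theorem norm_toLp_eq_one_of_star_dotProduct_self {𝕜 : Type*} [RCLike 𝕜] {ψ : n → 𝕜}
    (hψ : star ψ ⬝ᵥ ψ = 1) : ‖(WithLp.toLp 2 ψ : EuclideanSpace 𝕜 n)‖ = 1 := by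
  have h := norm_sq_eq_re_inner (𝕜 := 𝕜) (WithLp.toLp 2 ψ : EuclideanSpace 𝕜 n)
  rw [EuclideanSpace.inner_toLp_toLp, dotProduct_comm, hψ, RCLike.one_re] at h
  exact (pow_eq_one_iff_of_nonneg (norm_nonneg _) two_ne_zero).1 h

variable [DecidableEq n]

theorem star_mulVec_dotProduct_mulVec_of_mem_unitaryGroup {α : Type*} [CommRing α] [StarRing α]
    {U : Matrix n n α} (hU : U ∈ unitaryGroup n α) (v : n → α) :
    star (U *ᵥ v) ⬝ᵥ (U *ᵥ v) = star v ⬝ᵥ v := by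
  rw [star_mulVec, dotProduct_mulVec, vecMul_vecMul, ← star_eq_conjTranspose, hU.1, vecMul_one]

def phaseStabilizer (ψ : n → ℂ) : Subgroup (unitaryGroup n ℂ) where
  carrier := {U | ∃ θ : ℝ, (U : Matrix n n ℂ) *ᵥ ψ = exp (θ * I) • ψ}
  one_mem' := ⟨0, by simp⟩
  mul_mem' := by
    rintro a b ⟨θ, ha⟩ ⟨φ, hb⟩
    refine ⟨θ + φ, ?_⟩
    rw [UnitaryGroup.mul_apply, ← mulVec_mulVec, hb, mulVec_smul, ha, smul_smul, ← exp_add]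
    push_cast
    ring_nf
  inv_mem' := by
    rintro a ⟨θ, ha⟩
    refine ⟨-θ, ?_⟩
    have h : ψ = exp (θ * I) • ((a⁻¹ : unitaryGroup n ℂ) : Matrix n n ℂ) *ᵥ ψ := by
      rw [← mulVec_smul, ← ha, mulVec_mulVec, ← UnitaryGroup.mul_apply, inv_mul_cancel,
        UnitaryGroup.one_apply, one_mulVec]
    rw [ofReal_neg, neg_mul, Complex.exp_neg, eq_inv_smul_iff₀ (exp_ne_zero _)]
    exact h.symm

theorem mem_phaseStabilizer_of_norm_star_dotProduct_mulVec_eq_one {ψ : n → ℂ}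
    (hψ : star ψ ⬝ᵥ ψ = 1) {U : unitaryGroup n ℂ}
    (h : ‖star ψ ⬝ᵥ ((U : Matrix n n ℂ) *ᵥ ψ)‖ = 1) :
    U ∈ phaseStabilizer ψ := by
  have hUψ : star ((U : Matrix n n ℂ) *ᵥ ψ) ⬝ᵥ ((U : Matrix n n ℂ) *ᵥ ψ) = 1 := by
    rw [star_mulVec_dotProduct_mulVec_of_mem_unitaryGroup U.2, hψ]
  obtain ⟨θ, hθ⟩ := exists_exp_smul_of_norm_inner_eq_one
    (norm_toLp_eq_one_of_star_dotProduct_self hψ)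
    (norm_toLp_eq_one_of_star_dotProduct_self hUψ)
    (by rwa [EuclideanSpace.inner_toLp_toLp, dotProduct_comm])
  exact ⟨θ, congrArg WithLp.ofLp hθ⟩

end Matrix

theorem inv_mul_mem_phaseStabilizer_of_fidKernel_eq_one {N : ℕ} {ψ : Fin N → ℂ}
    (hψ : star ψ ⬝ᵥ ψ = 1) {C D : unitaryGroup (Fin N) ℂ} (h : fidKernel ψ C D = 1) :
    C⁻¹ * D ∈ phaseStabilizer ψ := by
  refine mem_phaseStabilizer_of_norm_star_dotProduct_mulVec_eq_one hψ ?_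
  exact (pow_eq_one_iff_of_nonneg (norm_nonneg _) two_ne_zero).1 h

theorem star_dotProduct_mulVec_eq_zero_of_fidKernel_eq_zero {N : ℕ} {ψ : Fin N → ℂ}
    {C D : unitaryGroup (Fin N) ℂ} (h : fidKernel ψ C D = 0) :
    star ψ ⬝ᵥ (((C : Matrix (Fin N) (Fin N) ℂ)ᴴ * (D : Matrix (Fin N) (Fin N) ℂ)) *ᵥ ψ) = 0 :=
  norm_eq_zero.1 (pow_eq_zero_iff two_ne_zero |>.1 h)

/-- Ideal kernel implies covariance: if the fidelity kernel equals `1` on same-class pairs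
and `0` on different-class pairs for nonempty classes `U⁺`, `U⁻`, then there exist a
subgroup `S` and `C₊ ∈ U⁺`, `C₋ ∈ U⁻` with `U⁺ ⊆ C₊S`, `U⁻ ⊆ C₋S`, every `S ∈ S` fixes
`|ψ⟩` up to global phase, and `⟨ψ|C₊†C₋|ψ⟩ = 0`. -/
theorem ideal_kernel_implies_covariant (N : ℕ) (ψ : Fin N → ℂ)
    (hψ : star ψ ⬝ᵥ ψ = 1)
    (Up Um : Set (Matrix.unitaryGroup (Fin N) ℂ))
    (hUpne : Up.Nonempty) (hUmne : Um.Nonempty)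
    (h1p : ∀ D ∈ Up, ∀ D' ∈ Up, fidKernel ψ D D' = 1)
    (h1m : ∀ D ∈ Um, ∀ D' ∈ Um, fidKernel ψ D D' = 1)
    (h0 : ∀ D ∈ Up, ∀ D' ∈ Um, fidKernel ψ D D' = 0) :
    ∃ S : Subgroup (Matrix.unitaryGroup (Fin N) ℂ),
    ∃ Cp ∈ Up, ∃ Cm ∈ Um,
      (∀ D ∈ Up, ∃ s ∈ S, D = Cp * s) ∧
      (∀ D ∈ Um, ∃ s ∈ S, D = Cm * s) ∧
      (∀ s ∈ S, ∃ θ : ℝ,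
        (s : Matrix (Fin N) (Fin N) ℂ) *ᵥ ψ = Complex.exp (θ * Complex.I) • ψ) ∧
      star ψ ⬝ᵥ ((((Cp : Matrix (Fin N) (Fin N) ℂ))ᴴ
        * (Cm : Matrix (Fin N) (Fin N) ℂ)) *ᵥ ψ) = 0 := by
  obtain ⟨Cp, hCp⟩ := hUpne
  obtain ⟨Cm, hCm⟩ := hUmne
  refine ⟨phaseStabilizer ψ, Cp, hCp, Cm, hCm, ?_, ?_, fun _ hs ↦ hs,
    star_dotProduct_mulVec_eq_zero_of_fidKernel_eq_zero (h0 Cp hCp Cm hCm)⟩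
  · exact fun D hD ↦ ⟨Cp⁻¹ * D,
      inv_mul_mem_phaseStabilizer_of_fidKernel_eq_one hψ (h1p Cp hCp D hD), by group⟩
  · exact fun D hD ↦ ⟨Cm⁻¹ * D,
      inv_mul_mem_phaseStabilizer_of_fidKernel_eq_one hψ (h1m Cm hCm D hD), by group⟩
end
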